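/- arXiv:1107.4624 — 4 statements merged into one kernel-verified Lean document; each statement's English description precedes it below -/
import Mathlib

section
/- Let C be a vertex cover of G of size k, and let H be a gadget graph for (G, f, b_1, …, b_n). Then the following set is a vertex cover of H of size exactly k + f + m + Σ_{i=1}^n b_i: for each v_i ∈ C, the vertex z_i together with all blue vertices of C^i; for each v_i ∉ C, all red vertices of C^i; for each edge {v_i, v_j} of G with v_i ∈ C, the internal vertex of the path P_ij adjacent to the internal vertex's blue neighbor lying on C^j (if both v_i and v_j are in C, either internal vertex may be chosen); and the central vertex of each of the f copies of the path on three vertices. -/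
/-- A set `C` of vertices is a vertex cover of `G` if every edge of `G`
has at least one endpoint in `C`. -/
def IsVertexCover {V : Type*} (G : SimpleGraph V) (C : Set V) : Prop :=
  ∀ ⦃x y : V⦄, G.Adj x y → x ∈ C ∨ y ∈ C

/-- A gadget graph `H` for `(G, f, b)`.  The pieces are:
* for each vertex `i` of `G`, a cycle `cyc i` on `2 * b i` vertices, colored
  alternately blue (even position) and red (odd position), together with a pendant
  vertex `pend i` whose unique neighbor is the red cycle vertex at position `ρ i`;
* for each edge `{i, j}` of `G`, a three-edge path
  `cyc i (β i j) — inter i j — inter j i — cyc j (β j i)` whose endpoints are blue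
  cycle vertices (distinct for distinct paths) and whose internal vertices belong
  to no other piece;
* `f` disjoint copies of the path on three vertices `p3 t 0 — p3 t 1 — p3 t 2`.
These pieces are pairwise disjoint, and `H` has no further vertices or edges. -/
structure GadgetGraph {n : ℕ} (G : SimpleGraph (Fin n)) (f : ℕ) (b : Fin n → ℕ)
    {W : Type*} (H : SimpleGraph W) where
  cyc : (i : Fin n) → ZMod (2 * b i) → W
  pend : Fin n → W
  inter : (i j : Fin n) → G.Adj i j → W
  p3 : Fin f → Fin 3 → W
  pieces_bij : Function.Bijective
    (fun x : (Σ i : Fin n, ZMod (2 * b i)) ⊕ (Fin n) ⊕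
        (Σ' (i : Fin n) (j : Fin n), G.Adj i j) ⊕ (Fin f × Fin 3) =>
      match x with
      | .inl ⟨i, t⟩ => cyc i t
      | .inr (.inl i) => pend i
      | .inr (.inr (.inl ⟨i, j, h⟩)) => inter i j h
      | .inr (.inr (.inr (t, k))) => p3 t k)
  ρ : (i : Fin n) → ZMod (2 * b i)
  ρ_odd : ∀ i, Odd ((ρ i).val)
  β : (i j : Fin n) → G.Adj i j → ZMod (2 * b i)
  β_even : ∀ i j h, Even ((β i j h).val)
  β_inj : ∀ i j j' (h : G.Adj i j) (h' : G.Adj i j'), β i j h = β i j' h' → j = j'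
  adj_iff : ∀ x y : W, H.Adj x y ↔
    ((∃ i t, (x = cyc i t ∧ y = cyc i (t + 1)) ∨ (y = cyc i t ∧ x = cyc i (t + 1))) ∨
     (∃ i, (x = pend i ∧ y = cyc i (ρ i)) ∨ (y = pend i ∧ x = cyc i (ρ i))) ∨
     (∃ i j h, (x = cyc i (β i j h) ∧ y = inter i j h) ∨
               (y = cyc i (β i j h) ∧ x = inter i j h)) ∨
     (∃ i j h, x = inter i j h ∧ y = inter j i (G.adj_symm h)) ∨
     (∃ t, (x = p3 t 0 ∧ y = p3 t 1) ∨ (y = p3 t 0 ∧ x = p3 t 1) ∨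
           (x = p3 t 1 ∧ y = p3 t 2) ∨ (y = p3 t 1 ∧ x = p3 t 2)))

/-!
Every edge of `H` is covered: cycle edges because the cover contains a whole colour class of
each cycle, pendant edges by `z_i` (if `i ∈ C`) or by its red neighbour, the three edges of a path
`P_ij` by the blue end on a cycle of `C` together with the selected internal vertex (when `i ∉ C`,
the cover property of `C` gives `j ∈ C` and the internal vertex next to `C^i` is selected), and
the edges of a `P_3` by its centre.

For the size, the vertices of `H` are indexed bijectively by a sum type of pieces, and the
preimage of the cover consists of one colour class (`b_i` vertices) of every cycle, the `z_i`
with `i ∈ C`, one internal vertex of every path (an orientation of `G`, so `m` of them) and the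
`f` centres.
-/

open Finset

theorem ZMod.odd_val_add_one_iff {N : ℕ} [NeZero N] (hN : Even N) (t : ZMod N) :
    Odd (t + 1).val ↔ Even t.val := by
  have hN2 : 2 ≤ N := by
    obtain ⟨m, rfl⟩ := hN
    have := NeZero.ne (m + m)
    omega
  rw [ZMod.val_add, ZMod.val_one_eq_one_mod, Nat.one_mod_eq_one.mpr (by omega),
    Nat.odd_iff, Nat.even_iff, Nat.mod_mod_of_dvd _ (even_iff_two_dvd.mp hN)]
  omega

theorem ZMod.even_val_add_one_iff {N : ℕ} [NeZero N] (hN : Even N) (t : ZMod N) :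
    Even (t + 1).val ↔ Odd t.val := by
  rw [← Nat.not_odd_iff_even, ZMod.odd_val_add_one_iff hN, Nat.not_even_iff_odd]

theorem ZMod.card_filter_even_val_eq_card_filter_odd_val {N : ℕ} [NeZero N] (hN : Even N) :
    #{t : ZMod N | Even t.val} = #{t : ZMod N | Odd t.val} :=
  card_bij' (fun t _ => t + 1) (fun t _ => t - 1)
    (by simp [ZMod.odd_val_add_one_iff hN])
    (fun t ht => by simpa [← ZMod.odd_val_add_one_iff hN] using ht) (by simp) (by simp)

theorem ZMod.card_filter_even_val (m : ℕ) [NeZero m] :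
    #{t : ZMod (2 * m) | Even t.val} = m := by
  have hsplit := card_filter_add_card_filter_not (s := (univ : Finset (ZMod (2 * m))))
    (fun t => Even t.val)
  simp only [Nat.not_even_iff_odd, card_univ, ZMod.card,
    ← ZMod.card_filter_even_val_eq_card_filter_odd_val (even_two_mul m)] at hsplit
  omega

theorem ZMod.card_filter_odd_val (m : ℕ) [NeZero m] :
    #{t : ZMod (2 * m) | Odd t.val} = m := by
  rw [← ZMod.card_filter_even_val_eq_card_filter_odd_val (even_two_mul m),
    ZMod.card_filter_even_val]

theorem SimpleGraph.card_eq_card_edgeFinset_of_orientation {V : Type*} [Fintype V]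
    [DecidableEq V] {G : SimpleGraph V} [DecidableRel G.Adj]
    (Q : Finset (Σ' (i j : V), G.Adj i j))
    (hQ : ∀ i j (h : G.Adj i j), ⟨i, j, h⟩ ∈ Q ↔ ⟨j, i, h.symm⟩ ∉ Q) :
    #Q = #G.edgeFinset := by
  let edge : (Σ' (i j : V), G.Adj i j) → Sym2 V := fun p => s(p.1, p.2.1)
  have hinj : Set.InjOn edge Q := by
    rintro ⟨i, j, hij⟩ hp ⟨i', j', hij'⟩ hq he
    rcases Sym2.eq_iff.mp he with ⟨rfl, rfl⟩ | ⟨rfl, rfl⟩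
    · rfl
    · exact absurd hq ((hQ _ _ hij).1 hp)
  have himage : edge '' Q = G.edgeSet := by
    ext e
    induction e with | _ i j => ?_
    refine ⟨?_, fun hij => ?_⟩
    · rintro ⟨⟨i', j', h⟩, -, he⟩
      rw [← he]
      exact h
    · by_cases hQij : ⟨i, j, hij⟩ ∈ Q
      · exact ⟨_, hQij, rfl⟩
      · exact ⟨⟨j, i, G.adj_symm hij⟩, not_not.mp (mt (hQ i j hij).2 hQij), Sym2.eq_swap⟩
  rw [← Set.ncard_coe_finset, ← hinj.ncard_image, himage, ← SimpleGraph.coe_edgeFinset,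
    Set.ncard_coe_finset]

namespace GadgetGraph

variable {n : ℕ} {G : SimpleGraph (Fin n)} {f : ℕ} {b : Fin n → ℕ} {W : Type*}
  {H : SimpleGraph W} (gg : GadgetGraph G f b H)

variable (G f b) in
abbrev Piece : Type :=
  (Σ i : Fin n, ZMod (2 * b i)) ⊕ Fin n ⊕ (Σ' (i j : Fin n), G.Adj i j) ⊕ (Fin f × Fin 3)

def vertex : Piece G f b → W
  | .inl ⟨i, t⟩ => gg.cyc i t
  | .inr (.inl i) => gg.pend i
  | .inr (.inr (.inl ⟨i, j, h⟩)) => gg.inter i j h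
  | .inr (.inr (.inr (t, k))) => gg.p3 t k

theorem vertex_injective : Function.Injective gg.vertex := gg.pieces_bij.1

theorem vertex_surjective : Function.Surjective gg.vertex := gg.pieces_bij.2

def cover (C : Set (Fin n)) (P : Set W) : Set W :=
  {x | ∃ i ∈ C, x = gg.pend i} ∪
    {x | ∃ i ∈ C, ∃ t, Even t.val ∧ x = gg.cyc i t} ∪
    {x | ∃ i ∉ C, ∃ t, Odd t.val ∧ x = gg.cyc i t} ∪
    P ∪
    {x | ∃ t : Fin f, x = gg.p3 t 1}

open Classical in
noncomputable def coverPieces [∀ i, NeZero (b i)] (C : Set (Fin n)) (P : Set W) :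
    Finset (Piece G f b) :=
  (univ.sigma fun i => {t | (i ∈ C ∧ Even t.val) ∨ (i ∉ C ∧ Odd t.val)}).disjSum
    (C.toFinset.disjSum
      ((univ.filter fun p : Σ' (i j : Fin n), G.Adj i j => gg.inter p.1 p.2.1 p.2.2 ∈ P).disjSum
        (univ ×ˢ {1})))

variable {gg} {C : Set (Fin n)} {P : Set W}

theorem pend_mem_cover {i : Fin n} (hi : i ∈ C) : gg.pend i ∈ gg.cover C P :=
  Or.inl (Or.inl (Or.inl (Or.inl ⟨i, hi, rfl⟩)))

theorem cyc_mem_cover_of_even {i : Fin n} {t : ZMod (2 * b i)} (hi : i ∈ C) (ht : Even t.val) :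
    gg.cyc i t ∈ gg.cover C P :=
  Or.inl (Or.inl (Or.inl (Or.inr ⟨i, hi, t, ht, rfl⟩)))

theorem cyc_mem_cover_of_odd {i : Fin n} {t : ZMod (2 * b i)} (hi : i ∉ C) (ht : Odd t.val) :
    gg.cyc i t ∈ gg.cover C P :=
  Or.inl (Or.inl (Or.inr ⟨i, hi, t, ht, rfl⟩))

theorem subset_cover : P ⊆ gg.cover C P := fun _ hx => Or.inl (Or.inr hx)

theorem p3_one_mem_cover (t : Fin f) : gg.p3 t 1 ∈ gg.cover C P := Or.inr ⟨t, rfl⟩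

theorem cyc_mem_cover_or_cyc_add_one_mem_cover [∀ i, NeZero (b i)] (i : Fin n)
    (t : ZMod (2 * b i)) : gg.cyc i t ∈ gg.cover C P ∨ gg.cyc i (t + 1) ∈ gg.cover C P := by
  have h2b : Even (2 * b i) := even_two_mul (b i)
  by_cases hi : i ∈ C
  · rcases Nat.even_or_odd t.val with ht | ht
    · exact .inl (cyc_mem_cover_of_even hi ht)
    · exact .inr (cyc_mem_cover_of_even hi ((ZMod.even_val_add_one_iff h2b t).2 ht))
  · rcases Nat.even_or_odd t.val with ht | ht
    · exact .inr (cyc_mem_cover_of_odd hi ((ZMod.odd_val_add_one_iff h2b t).2 ht))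
    · exact .inl (cyc_mem_cover_of_odd hi ht)

theorem pend_mem_cover_or_cyc_mem_cover (i : Fin n) :
    gg.pend i ∈ gg.cover C P ∨ gg.cyc i (gg.ρ i) ∈ gg.cover C P := by
  by_cases hi : i ∈ C
  · exact .inl (pend_mem_cover hi)
  · exact .inr (cyc_mem_cover_of_odd hi (gg.ρ_odd i))

theorem cyc_mem_cover_or_inter_mem_cover (hC : IsVertexCover G C)
    (hPsel : ∀ i j (h : G.Adj i j), i ∈ C → j ∉ C → gg.inter j i (G.adj_symm h) ∈ P)
    {i j : Fin n} (h : G.Adj i j) :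
    gg.cyc i (gg.β i j h) ∈ gg.cover C P ∨ gg.inter i j h ∈ gg.cover C P := by
  by_cases hi : i ∈ C
  · exact .inl (cyc_mem_cover_of_even hi (gg.β_even i j h))
  · exact .inr (subset_cover (hPsel j i h.symm ((hC h).resolve_left hi) hi))

theorem inter_mem_cover_or_inter_mem_cover
    (hPone : ∀ i j (h : G.Adj i j), gg.inter i j h ∈ P ↔ gg.inter j i (G.adj_symm h) ∉ P)
    {i j : Fin n} (h : G.Adj i j) :
    gg.inter i j h ∈ gg.cover C P ∨ gg.inter j i h.symm ∈ gg.cover C P := by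
  by_cases hij : gg.inter i j h ∈ P
  · exact .inl (subset_cover hij)
  · exact .inr (subset_cover (not_not.mp (mt (hPone i j h).2 hij)))

theorem isVertexCover_cover [∀ i, NeZero (b i)] (hC : IsVertexCover G C)
    (hPone : ∀ i j (h : G.Adj i j), gg.inter i j h ∈ P ↔ gg.inter j i (G.adj_symm h) ∉ P)
    (hPsel : ∀ i j (h : G.Adj i j), i ∈ C → j ∉ C → gg.inter j i (G.adj_symm h) ∈ P) :
    IsVertexCover H (gg.cover C P) := by
  intro x y hxy
  rcases (gg.adj_iff x y).1 hxy with
      ⟨i, t, ⟨rfl, rfl⟩ | ⟨rfl, rfl⟩⟩ | ⟨i, ⟨rfl, rfl⟩ | ⟨rfl, rfl⟩⟩ |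
      ⟨i, j, h, ⟨rfl, rfl⟩ | ⟨rfl, rfl⟩⟩ | ⟨i, j, h, rfl, rfl⟩ |
      ⟨t, ⟨rfl, rfl⟩ | ⟨rfl, rfl⟩ | ⟨rfl, rfl⟩ | ⟨rfl, rfl⟩⟩
  · exact cyc_mem_cover_or_cyc_add_one_mem_cover i t
  · exact (cyc_mem_cover_or_cyc_add_one_mem_cover i t).symm
  · exact pend_mem_cover_or_cyc_mem_cover i
  · exact (pend_mem_cover_or_cyc_mem_cover i).symm
  · exact cyc_mem_cover_or_inter_mem_cover hC hPsel h
  · exact (cyc_mem_cover_or_inter_mem_cover hC hPsel h).symm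
  · exact inter_mem_cover_or_inter_mem_cover hPone h
  · exact .inr (p3_one_mem_cover t)
  · exact .inl (p3_one_mem_cover t)
  · exact .inl (p3_one_mem_cover t)
  · exact .inr (p3_one_mem_cover t)

theorem vertex_notMem (hP : ∀ x ∈ P, ∃ i j, ∃ h : G.Adj i j, x = gg.inter i j h)
    {y : Piece G f b} (hy : ∀ p, y ≠ .inr (.inr (.inl p))) : gg.vertex y ∉ P := fun hyP => by
  obtain ⟨i, j, h, he⟩ := hP _ hyP
  exact hy ⟨i, j, h⟩ (gg.vertex_injective he)

theorem preimage_vertex_cover [∀ i, NeZero (b i)]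
    (hP : ∀ x ∈ P, ∃ i j, ∃ h : G.Adj i j, x = gg.inter i j h) :
    gg.vertex ⁻¹' gg.cover C P = gg.coverPieces C P := by
  have cyc_eq (i t) : gg.cyc i t = gg.vertex (.inl ⟨i, t⟩) := rfl
  have pend_eq (i) : gg.pend i = gg.vertex (.inr (.inl i)) := rfl
  have p3_eq (t k) : gg.p3 t k = gg.vertex (.inr (.inr (.inr (t, k)))) := rfl
  ext y
  simp only [Set.mem_preimage, cover, Set.mem_union, Set.mem_ofPred_eq, cyc_eq, pend_eq, p3_eq,
    gg.vertex_injective.eq_iff]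
  rcases y with ⟨i, t⟩ | i | ⟨i, j, h⟩ | ⟨t, k⟩ <;> simp [coverPieces, vertex_notMem hP]
  · -- the `Sigma` equation leaves a `HEq` that `simp` cannot eliminate
    constructor
    · rintro (⟨i', hi, t', ht, rfl, he⟩ | ⟨i', hi, t', ht, rfl, he⟩) <;> cases he <;>
        simp [*]
    · rintro (⟨hi, ht⟩ | ⟨hi, ht⟩)
      exacts [.inl ⟨i, hi, t, ht, rfl, .rfl⟩, .inr ⟨i, hi, t, ht, rfl, .rfl⟩]
  · rfl
  · exact eq_comm

theorem card_coverPieces [∀ i, NeZero (b i)] [DecidableRel G.Adj]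
    (hPone : ∀ i j (h : G.Adj i j), gg.inter i j h ∈ P ↔ gg.inter j i (G.adj_symm h) ∉ P) :
    #(gg.coverPieces C P) = ∑ i, b i + (C.ncard + (#G.edgeFinset + f)) := by
  classical
  have hcyc (i : Fin n) :
      #{t : ZMod (2 * b i) | (i ∈ C ∧ Even t.val) ∨ (i ∉ C ∧ Odd t.val)} = b i := by
    by_cases hi : i ∈ C <;> simp [hi, ZMod.card_filter_even_val, ZMod.card_filter_odd_val]
  simp only [coverPieces, card_disjSum, card_sigma, hcyc, ← Set.ncard_eq_toFinset_card',
    card_product, card_univ, Fintype.card_fin, card_singleton, mul_one]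
  rw [SimpleGraph.card_eq_card_edgeFinset_of_orientation _ (by simpa using hPone)]

end GadgetGraph

theorem stmt0_general {n : ℕ} (G : SimpleGraph (Fin n)) [DecidableRel G.Adj]
    (f : ℕ) (b : Fin n → ℕ) {W : Type*} (H : SimpleGraph W)
    (hb2 : ∀ i, 2 ≤ b i)
    (gg : GadgetGraph G f b H)
    (C : Set (Fin n)) (k : ℕ) (hC : IsVertexCover G C) (hCk : C.ncard = k)
    (P : Set W)
    (hPsub : ∀ x ∈ P, ∃ i, ∃ j, ∃ h : G.Adj i j, x = gg.inter i j h)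
    (hPone : ∀ i j (h : G.Adj i j), gg.inter i j h ∈ P ↔ gg.inter j i (G.adj_symm h) ∉ P)
    (hPsel : ∀ i j (h : G.Adj i j), i ∈ C → j ∉ C → gg.inter j i (G.adj_symm h) ∈ P) :
    IsVertexCover H
      ({x | ∃ i ∈ C, x = gg.pend i} ∪
       {x | ∃ i ∈ C, ∃ t, Even t.val ∧ x = gg.cyc i t} ∪
       {x | ∃ i ∉ C, ∃ t, Odd t.val ∧ x = gg.cyc i t} ∪
       P ∪
       {x | ∃ t : Fin f, x = gg.p3 t 1}) ∧
    ({x | ∃ i ∈ C, x = gg.pend i} ∪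
       {x | ∃ i ∈ C, ∃ t, Even t.val ∧ x = gg.cyc i t} ∪
       {x | ∃ i ∉ C, ∃ t, Odd t.val ∧ x = gg.cyc i t} ∪
       P ∪
       {x | ∃ t : Fin f, x = gg.p3 t 1} : Set W).ncard
      = k + f + G.edgeFinset.card + ∑ i, b i := by
  have (i : Fin n) : NeZero (b i) := ⟨by have := hb2 i; omega⟩
  refine ⟨gg.isVertexCover_cover hC hPone hPsel, ?_⟩
  change (gg.cover C P).ncard = _
  rw [← Set.ncard_preimage_of_injective_subset_range gg.vertex_injective
      (gg.vertex_surjective.range_eq ▸ Set.subset_univ _),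
    GadgetGraph.preimage_vertex_cover hPsub, Set.ncard_coe_finset,
    GadgetGraph.card_coverPieces hPone, hCk]
  ring

/-- If `C` is a vertex cover of `G` of size `k` and `H` is a gadget
graph for `(G, f, b)`, then the set consisting of: `pend i` and all blue vertices of the
`i`-th cycle for `i ∈ C`; all red vertices of the `i`-th cycle for `i ∉ C`; one internal
vertex from each path (the one adjacent to the blue endpoint on the cycle of the
non-cover side, either one if both sides are in `C`); and the central vertex of each of
the `f` copies of the 3-vertex path, is a vertex cover of `H` of size exactly
`k + f + m + ∑ i, b i`. -/
theorem stmt0 {n : ℕ} (G : SimpleGraph (Fin n)) [DecidableRel G.Adj]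
    (f : ℕ) (b : Fin n → ℕ) {W : Type*} (H : SimpleGraph W)
    (hniso : ∀ i : Fin n, ∃ j, G.Adj i j)
    (hb2 : ∀ i, 2 ≤ b i)
    (hbdeg : ∀ i, b i = G.degree i ∨ b i = G.degree i + 1 ∨ b i = G.degree i + 2)
    (gg : GadgetGraph G f b H)
    (C : Set (Fin n)) (k : ℕ) (hC : IsVertexCover G C) (hCk : C.ncard = k)
    (P : Set W)
    (hPsub : ∀ x ∈ P, ∃ i, ∃ j, ∃ h : G.Adj i j, x = gg.inter i j h)
    (hPone : ∀ i j (h : G.Adj i j), gg.inter i j h ∈ P ↔ gg.inter j i (G.adj_symm h) ∉ P)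
    (hPsel : ∀ i j (h : G.Adj i j), i ∈ C → j ∉ C → gg.inter j i (G.adj_symm h) ∈ P) :
    IsVertexCover H
      ({x | ∃ i ∈ C, x = gg.pend i} ∪
       {x | ∃ i ∈ C, ∃ t, Even t.val ∧ x = gg.cyc i t} ∪
       {x | ∃ i ∉ C, ∃ t, Odd t.val ∧ x = gg.cyc i t} ∪
       P ∪
       {x | ∃ t : Fin f, x = gg.p3 t 1}) ∧
    ({x | ∃ i ∈ C, x = gg.pend i} ∪
       {x | ∃ i ∈ C, ∃ t, Even t.val ∧ x = gg.cyc i t} ∪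
       {x | ∃ i ∉ C, ∃ t, Odd t.val ∧ x = gg.cyc i t} ∪
       P ∪
       {x | ∃ t : Fin f, x = gg.p3 t 1} : Set W).ncard
      = k + f + G.edgeFinset.card + ∑ i, b i :=
  stmt0_general G f b H hb2 gg C k hC hCk P hPsub hPone hPsel
end

section
/- Let H be a gadget graph for (G, f, b_1, …, b_n) and let k be a natural number. If H has a vertex cover of size at most k + f + m + Σ_{i=1}^n b_i, then G has a vertex cover of size at most k. -/
open Finset

theorem Equiv.Perm.card_add_card_filter_apply_mem {α : Type*} [Fintype α] [DecidableEq α]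
    (σ : Equiv.Perm α) {T : Finset α} (hT : ∀ t, t ∈ T ∨ σ t ∈ T) :
    Fintype.card α + #{t ∈ T | σ t ∈ T} = 2 * #T := by
  have hunion : T ∪ T.map σ.symm.toEmbedding = univ := by
    ext t; simpa [mem_map_equiv] using hT t
  have hinter : T ∩ T.map σ.symm.toEmbedding = {t ∈ T | σ t ∈ T} := by
    ext t; simp [mem_map_equiv]
  rw [← card_univ, ← hunion, ← hinter, card_union_add_card_inter, card_map, two_mul]

namespace ZMod

variable {b : ℕ} [NeZero b]

theorem exists_eq_add_two_mul_add_one {x y : ZMod (2 * b)} (hx : Even x.val) (hy : Odd y.val) :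
    ∃ m : ℕ, y = x + 2 * m + 1 := by
  obtain ⟨a, ha⟩ := hx
  obtain ⟨c, hc⟩ := hy
  have hab : a ≤ b := by have := x.val_lt; omega
  refine ⟨c + (b - a), ?_⟩
  rw [← natCast_zmod_val x, ← natCast_zmod_val y, ha, hc]
  norm_cast
  rw [show a + a + 2 * (c + (b - a)) + 1 = 2 * c + 1 + 2 * b by omega]
  simp

variable {T : Finset (ZMod (2 * b))} (hT : ∀ t, t ∈ T ∨ t + 1 ∈ T)
include hT

theorem two_mul_add_card_filter_add_one_mem : 2 * b + #{t ∈ T | t + 1 ∈ T} = 2 * #T := by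
  have h := (Equiv.addRight (1 : ZMod (2 * b))).card_add_card_filter_apply_mem hT
  rwa [ZMod.card] at h

theorem le_card_of_forall_mem_or_add_one_mem : b ≤ #T := by
  have := two_mul_add_card_filter_add_one_mem hT
  omega

theorem lt_card_of_forall_mem_or_add_one_mem {x y : ZMod (2 * b)} (hxT : x ∈ T)
    (hx : Even x.val) (hyT : y ∈ T) (hy : Odd y.val) : b < #T := by
  by_contra! hle
  -- a cover by `b` vertices contains no two consecutive ones, so it is closed under `t ↦ t + 2`
  have hsucc : ∀ t ∈ T, t + 1 ∉ T := by
    intro t ht ht1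
    have := two_mul_add_card_filter_add_one_mem hT
    have : 0 < #{t ∈ T | t + 1 ∈ T} := card_pos.2 ⟨t, mem_filter.2 ⟨ht, ht1⟩⟩
    omega
  have hstep : ∀ t ∈ T, t + 2 ∈ T := fun t ht => by
    simpa [add_assoc, one_add_one_eq_two] using (hT (t + 1)).resolve_left (hsucc t ht)
  have heven : ∀ m : ℕ, x + 2 * m ∈ T := by
    intro m
    induction m with
    | zero => simpa using hxT
    | succ m ih => simpa [mul_add, add_assoc] using hstep _ ih
  obtain ⟨m, rfl⟩ := exists_eq_add_two_mul_add_one hx hy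
  exact hsucc _ (heven m) hyT

end ZMod

namespace SimpleGraph

variable {V : Type*} (G : SimpleGraph V)

theorem sum_edgeFinset_le_sum_dart {M : Type*} [Fintype V] [DecidableEq V] [DecidableRel G.Adj]
    [AddCommMonoid M] [PartialOrder M] [IsOrderedAddMonoid M] {c : Sym2 V → M} {g : G.Dart → M}
    (h : ∀ d : G.Dart, c d.edge ≤ g d + g d.symm) :
    ∑ e ∈ G.edgeFinset, c e ≤ ∑ d, g d := by
  rw [← sum_fiberwise_of_maps_to (g := Dart.edge) (t := G.edgeFinset) (by simp)]
  refine sum_le_sum fun e he => ?_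
  obtain ⟨d, rfl⟩ : ∃ d : G.Dart, d.edge = e := by
    induction e using Sym2.ind with
    | _ x y => exact ⟨⟨(x, y), G.mem_edgeFinset.1 he⟩, rfl⟩
  rw [d.edge_fiber, sum_pair d.symm_ne.symm]
  exact h d

theorem exists_isVertexCover_ncard_le [DecidableEq V] (C : Finset V) (E : Finset (Sym2 V))
    (hE : ∀ ⦃x y⦄, G.Adj x y → x ∉ C → y ∉ C → s(x, y) ∈ E) :
    ∃ C' : Set V, IsVertexCover G C' ∧ C'.ncard ≤ #C + #E := by
  refine ⟨↑(C ∪ E.image fun e => e.out.1), fun x y hxy => ?_, ?_⟩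
  · by_cases hx : x ∈ C
    · simp [hx]
    by_cases hy : y ∈ C
    · simp [hy]
    have hout : s(x, y).out.1 ∈ E.image fun e => e.out.1 := mem_image_of_mem _ (hE hxy hx hy)
    rcases Sym2.mem_iff.1 (Sym2.out_fst_mem s(x, y)) with h | h <;> rw [h] at hout
    · exact .inl (mem_coe.2 (mem_union_right _ hout))
    · exact .inr (mem_coe.2 (mem_union_right _ hout))
  · rw [Set.ncard_coe_finset]
    exact (card_union_le _ _).trans (Nat.add_le_add_left card_image_le _)

end SimpleGraph

namespace GadgetGraph

variable {n f : ℕ} {G : SimpleGraph (Fin n)} {b : Fin n → ℕ} {W : Type*} {H : SimpleGraph W}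
  (gg : GadgetGraph G f b H)

theorem adj_cyc (i : Fin n) (t : ZMod (2 * b i)) : H.Adj (gg.cyc i t) (gg.cyc i (t + 1)) :=
  (gg.adj_iff _ _).2 (.inl ⟨i, t, .inl ⟨rfl, rfl⟩⟩)

theorem adj_pend (i : Fin n) : H.Adj (gg.pend i) (gg.cyc i (gg.ρ i)) :=
  (gg.adj_iff _ _).2 (.inr (.inl ⟨i, .inl ⟨rfl, rfl⟩⟩))

theorem adj_cyc_inter {i j : Fin n} (h : G.Adj i j) :
    H.Adj (gg.cyc i (gg.β i j h)) (gg.inter i j h) :=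
  (gg.adj_iff _ _).2 (.inr (.inr (.inl ⟨i, j, h, .inl ⟨rfl, rfl⟩⟩)))

theorem adj_inter {i j : Fin n} (h : G.Adj i j) : H.Adj (gg.inter i j h) (gg.inter j i h.symm) :=
  (gg.adj_iff _ _).2 (.inr (.inr (.inr (.inl ⟨i, j, h, rfl, rfl⟩))))

theorem adj_p3 (t : Fin f) : H.Adj (gg.p3 t 0) (gg.p3 t 1) :=
  (gg.adj_iff _ _).2 (.inr (.inr (.inr (.inr ⟨t, .inl ⟨rfl, rfl⟩⟩))))

open Classical in
theorem ncard_eq_sum [DecidableRel G.Adj] [∀ i, NeZero (b i)] (S : Set W) :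
    S.ncard = ∑ i, (#{t | gg.cyc i t ∈ S} + if gg.pend i ∈ S then 1 else 0) +
      ∑ d : G.Dart, (if gg.inter d.fst d.snd d.adj ∈ S then 1 else 0) +
      ∑ t, ∑ k, (if gg.p3 t k ∈ S then 1 else 0) := by
  let e := Equiv.ofBijective _ gg.pieces_bij
  have : Fintype W := Fintype.ofEquiv _ e
  rw [Set.ncard_eq_toFinset_card', ← Set.filter_mem_univ_eq_toFinset, card_filter, ← e.sum_comp]
  simp only [e, Fintype.sum_sum_type, Fintype.sum_sigma, Fintype.sum_prod_type,
    Equiv.ofBijective_apply]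
  have hdart := Fintype.sum_equiv
    { toFun := fun x => ⟨(x.1, x.2.1), x.2.2⟩, invFun := fun d => ⟨d.fst, d.snd, d.adj⟩
      left_inv := fun _ => rfl, right_inv := fun _ => rfl : (Σ' i j, G.Adj i j) ≃ G.Dart }
    (fun x => if gg.inter x.1 x.2.1 x.2.2 ∈ S then 1 else 0)
    (fun d => if gg.inter d.fst d.snd d.adj ∈ S then 1 else 0) (fun _ => rfl)
  rw [hdart, sum_add_distrib]
  simp only [card_filter]
  ring

open Classical in
noncomputable def heavyVertices (S : Set W) : Finset (Fin n) :=
  {i | gg.pend i ∈ S ∨ ∃ t, Even t.val ∧ gg.cyc i t ∈ S}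

open Classical in
noncomputable def lightEdges [DecidableRel G.Adj] (S : Set W) : Finset (Sym2 (Fin n)) :=
  {e ∈ G.edgeFinset | ∀ v ∈ e, v ∉ gg.heavyVertices S}

variable {S : Set W}

theorem lightEdges_subset [DecidableRel G.Adj] : gg.lightEdges S ⊆ G.edgeFinset :=
  filter_subset _ _

theorem mk_mem_lightEdges [DecidableRel G.Adj] {x y : Fin n} (h : G.Adj x y)
    (hx : x ∉ gg.heavyVertices S) (hy : y ∉ gg.heavyVertices S) :
    s(x, y) ∈ gg.lightEdges S := by
  simp [lightEdges, h, hx, hy]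

variable (hS : IsVertexCover H S)
include hS

open Classical in
theorem add_ite_le_card_cyc_add_ite [∀ i, NeZero (b i)] (i : Fin n) :
    b i + (if i ∈ gg.heavyVertices S then 1 else 0) ≤
      #{t | gg.cyc i t ∈ S} + if gg.pend i ∈ S then 1 else 0 := by
  set T : Finset (ZMod (2 * b i)) := {t | gg.cyc i t ∈ S}
  have hT : ∀ t, t ∈ T ∨ t + 1 ∈ T := fun t => by simpa [T] using hS (gg.adj_cyc i t)
  have hb := ZMod.le_card_of_forall_mem_or_add_one_mem hT
  by_cases hpend : gg.pend i ∈ S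
  · split_ifs <;> omega
  by_cases hheavy : i ∈ gg.heavyVertices S
  · obtain ⟨t, ht, htS⟩ : ∃ t, Even t.val ∧ gg.cyc i t ∈ S := by
      simpa [heavyVertices, hpend] using hheavy
    have hρ : gg.cyc i (gg.ρ i) ∈ S := (hS (gg.adj_pend i)).resolve_left hpend
    have := ZMod.lt_card_of_forall_mem_or_add_one_mem hT (by simpa [T] using htS) ht
      (by simpa [T] using hρ) (gg.ρ_odd i)
    simp only [hpend, hheavy, if_true, if_false]
    omega
  · simpa [hpend, hheavy] using hb

open Classical in
theorem sum_add_card_heavyVertices_le [∀ i, NeZero (b i)] :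
    ∑ i, b i + #(gg.heavyVertices S) ≤
      ∑ i, (#{t | gg.cyc i t ∈ S} + if gg.pend i ∈ S then 1 else 0) :=
  calc ∑ i, b i + #(gg.heavyVertices S)
      = ∑ i, (b i + if i ∈ gg.heavyVertices S then 1 else 0) := by
        rw [sum_add_distrib, sum_boole, Nat.cast_id, filter_mem_eq_inter, univ_inter]
    _ ≤ _ := sum_le_sum fun i _ => gg.add_ite_le_card_cyc_add_ite hS i

theorem inter_mem_of_notMem_heavyVertices {i j : Fin n} (h : G.Adj i j)
    (hi : i ∉ gg.heavyVertices S) : gg.inter i j h ∈ S := by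
  refine (hS (gg.adj_cyc_inter h)).resolve_left fun hβ => hi ?_
  classical
  simpa [heavyVertices] using Or.inr ⟨_, gg.β_even i j h, hβ⟩

open Classical in
theorem one_add_ite_le_ite_inter_add_ite_inter (d : G.Dart) :
    1 + (if d.fst ∉ gg.heavyVertices S ∧ d.snd ∉ gg.heavyVertices S then 1 else 0) ≤
      (if gg.inter d.fst d.snd d.adj ∈ S then 1 else 0) +
        if gg.inter d.symm.fst d.symm.snd d.symm.adj ∈ S then 1 else 0 := by
  by_cases hout : d.fst ∉ gg.heavyVertices S ∧ d.snd ∉ gg.heavyVertices S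
  · simp [hout, gg.inter_mem_of_notMem_heavyVertices hS d.adj hout.1,
      gg.inter_mem_of_notMem_heavyVertices hS d.adj.symm hout.2]
  · have hmid : gg.inter d.fst d.snd d.adj ∈ S ∨
        gg.inter d.symm.fst d.symm.snd d.symm.adj ∈ S := hS (gg.adj_inter d.adj)
    rcases hmid with h | h <;> simp only [hout, h, if_true, if_false] <;> omega

open Classical in
theorem card_edgeFinset_add_card_lightEdges_le [DecidableRel G.Adj] :
    #G.edgeFinset + #(gg.lightEdges S) ≤
      ∑ d : G.Dart, if gg.inter d.fst d.snd d.adj ∈ S then 1 else 0 :=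
  calc #G.edgeFinset + #(gg.lightEdges S)
      = ∑ e ∈ G.edgeFinset, (1 + if e ∈ gg.lightEdges S then 1 else 0) := by
        rw [sum_add_distrib, sum_boole, card_eq_sum_ones, Nat.cast_id, filter_mem_eq_inter,
          inter_eq_right.2 gg.lightEdges_subset]
    _ ≤ _ := G.sum_edgeFinset_le_sum_dart fun d => by
        have hd : d.edge ∈ gg.lightEdges S ↔
            d.fst ∉ gg.heavyVertices S ∧ d.snd ∉ gg.heavyVertices S := by
          simp [lightEdges, SimpleGraph.Dart.edge]
        simpa only [hd] using gg.one_add_ite_le_ite_inter_add_ite_inter hS d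

open Classical in
theorem le_sum_p3 : f ≤ ∑ t, ∑ k, if gg.p3 t k ∈ S then 1 else 0 := by
  have hp3 (t : Fin f) : 1 ≤ ∑ k, if gg.p3 t k ∈ S then 1 else 0 := by
    rw [Fin.sum_univ_three]
    rcases hS (gg.adj_p3 t) with h | h <;> simp only [h, if_true] <;> omega
  simpa using sum_le_sum fun t (_ : t ∈ univ) => hp3 t

end GadgetGraph

theorem stmt3_general {n : ℕ} (G : SimpleGraph (Fin n)) [DecidableRel G.Adj]
    (f : ℕ) (b : Fin n → ℕ) {W : Type*} (H : SimpleGraph W)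
    (hb2 : ∀ i, 2 ≤ b i)
    (gg : GadgetGraph G f b H)
    (k : ℕ)
    (hex : ∃ S : Set W, IsVertexCover H S ∧
      S.ncard ≤ k + f + G.edgeFinset.card + ∑ i, b i) :
    ∃ C : Set (Fin n), IsVertexCover G C ∧ C.ncard ≤ k := by
  obtain ⟨S, hS, hcard⟩ := hex
  have : ∀ i, NeZero (b i) := fun i => ⟨by have := hb2 i; omega⟩
  obtain ⟨C, hC, hCcard⟩ := G.exists_isVertexCover_ncard_le (gg.heavyVertices S)
    (gg.lightEdges S) fun _ _ => gg.mk_mem_lightEdges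
  have hcyc := gg.sum_add_card_heavyVertices_le hS
  have hpath := gg.card_edgeFinset_add_card_lightEdges_le hS
  have hp3 := gg.le_sum_p3 hS
  rw [gg.ncard_eq_sum S] at hcard
  exact ⟨C, hC, by omega⟩

/-- If a gadget graph `H` for `(G, f, b)` has a vertex cover of size
at most `k + f + m + ∑ i, b i`, then `G` has a vertex cover of size at most `k`. -/
theorem stmt3 {n : ℕ} (G : SimpleGraph (Fin n)) [DecidableRel G.Adj]
    (f : ℕ) (b : Fin n → ℕ) {W : Type*} (H : SimpleGraph W)
    (hniso : ∀ i : Fin n, ∃ j, G.Adj i j)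
    (hb2 : ∀ i, 2 ≤ b i)
    (hbdeg : ∀ i, b i = G.degree i ∨ b i = G.degree i + 1 ∨ b i = G.degree i + 2)
    (gg : GadgetGraph G f b H)
    (k : ℕ)
    (hex : ∃ S : Set W, IsVertexCover H S ∧
      S.ncard ≤ k + f + G.edgeFinset.card + ∑ i, b i) :
    ∃ C : Set (Fin n), IsVertexCover G C ∧ C.ncard ≤ k :=
  stmt3_general G f b H hb2 gg k hex
end

section
/- Let b ≥ 2 and let H be the graph consisting of a cycle on 2b vertices whose vertices are colored alternately blue and red around the cycle, together with one additional vertex z whose unique neighbor is one red vertex of the cycle. Then: (i) the set of red vertices is a vertex cover of H of size b; (ii) the set of blue vertices together with z is a vertex cover of H of size b + 1; (iii) every vertex cover of H has size at least b, and a vertex cover of H of size exactly b is equal to the set of red vertices. -/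
open Finset

namespace ZMod

variable {n : ℕ} [NeZero n]

theorem odd_val_add_one (hn : 2 ∣ n) (t : ZMod n) : Odd (t + 1).val ↔ ¬Odd t.val := by
  rw [← natCast_eq_one_iff_odd, ← natCast_eq_one_iff_odd, natCast_val, natCast_val,
    cast_add hn, cast_one hn]
  generalize (cast t : ZMod 2) = s
  decide +revert

theorem forall_of_forall_add_one_iff {P : ZMod n → Prop} (hP : ∀ t, P (t + 1) ↔ P t)
    (r : ZMod n) (hr : P r) (t : ZMod n) : P t := by
  obtain ⟨k, hk⟩ := natCast_zmod_surjective (t - r)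
  rw [← add_sub_cancel r t, ← hk]
  clear hk
  induction k with
  | zero => simpa
  | succ k ih => rwa [Nat.cast_succ, ← add_assoc, hP]

theorem iff_of_add_one_iff_not {P Q : ZMod n → Prop} (hP : ∀ t, P (t + 1) ↔ ¬P t)
    (hQ : ∀ t, Q (t + 1) ↔ ¬Q t) {r : ZMod n} (hr : P r ↔ Q r) (t : ZMod n) : P t ↔ Q t :=
  forall_of_forall_add_one_iff (P := fun t ↦ P t ↔ Q t)
    (fun t ↦ by rw [hP, hQ, not_iff_not]) r hr t

open Classical in
theorem two_mul_ncard_eq_sum (T : Set (ZMod n)) :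
    2 * T.ncard = ∑ t, ((if t ∈ T then 1 else 0) + if t + 1 ∈ T then 1 else 0) := by
  have h : ∑ t : ZMod n, (if t ∈ T then 1 else 0) = T.ncard := by
    rw [sum_boole, Set.ncard_eq_toFinset_card']
    simp
  rw [sum_add_distrib, Fintype.sum_equiv (Equiv.addRight 1) (fun t ↦ if t + 1 ∈ T then 1 else 0)
    (fun t ↦ if t ∈ T then 1 else 0) (fun _ ↦ rfl), h, two_mul]

theorem le_two_mul_ncard_of_cover {T : Set (ZMod n)} (hT : ∀ t, t ∈ T ∨ t + 1 ∈ T) :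
    n ≤ 2 * T.ncard := by
  classical
  rw [two_mul_ncard_eq_sum]
  calc n = ∑ _ : ZMod n, 1 := by simp
    _ ≤ _ := sum_le_sum fun t _ ↦ by rcases hT t with h | h <;> simp [h]

theorem add_one_mem_iff_of_cover {T : Set (ZMod n)} (hT : ∀ t, t ∈ T ∨ t + 1 ∈ T)
    (hcard : 2 * T.ncard = n) (t : ZMod n) : t + 1 ∈ T ↔ t ∉ T := by
  classical
  have hle : ∀ t ∈ univ, 1 ≤ (if t ∈ T then 1 else 0) + if t + 1 ∈ T then 1 else 0 :=
    fun t _ ↦ by rcases hT t with h | h <;> simp [h]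
  have hsum :
      ∑ _ : ZMod n, 1 = ∑ t, ((if t ∈ T then 1 else 0) + if t + 1 ∈ T then 1 else 0) := by
    rw [← two_mul_ncard_eq_sum, hcard]
    simp
  have ht := (sum_eq_sum_iff_of_le hle).1 hsum t (mem_univ t)
  by_cases h : t ∈ T <;> by_cases h' : t + 1 ∈ T <;> simp [h, h'] at ht ⊢

theorem two_mul_ncard_of_add_one_mem_iff {T : Set (ZMod n)} (hT : ∀ t, t + 1 ∈ T ↔ t ∉ T) :
    2 * T.ncard = n := by
  classical
  rw [two_mul_ncard_eq_sum]
  calc _ = ∑ _ : ZMod n, 1 := sum_congr rfl fun t _ ↦ ?_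
    _ = n := by simp
  have ht := hT t
  by_cases h : t ∈ T <;> simp_all

theorem two_mul_ncard_setOf_odd_val (hn : 2 ∣ n) : 2 * {t : ZMod n | Odd t.val}.ncard = n :=
  two_mul_ncard_of_add_one_mem_iff (odd_val_add_one hn)

theorem two_mul_ncard_setOf_even_val (hn : 2 ∣ n) : 2 * {t : ZMod n | Even t.val}.ncard = n :=
  two_mul_ncard_of_add_one_mem_iff fun t ↦ by
    simp only [Set.mem_ofPred_eq, ← Nat.not_odd_iff_even, odd_val_add_one hn]

end ZMod

theorem Set.ncard_preimage_inl_add_ncard_preimage_inr {α β : Type*} [Finite α] [Finite β]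
    (S : Set (α ⊕ β)) : (Sum.inl ⁻¹' S).ncard + (Sum.inr ⁻¹' S).ncard = S.ncard := by
  conv_rhs => rw [← Set.image_preimage_inl_union_image_preimage_inr S]
  rw [Set.ncard_union_eq Set.disjoint_image_inl_image_inr,
    Set.ncard_image_of_injective _ Sum.inl_injective,
    Set.ncard_image_of_injective _ Sum.inr_injective]

theorem Set.setOf_exists_and_eq_inl {α β : Type*} (p : α → Prop) :
    {x : α ⊕ β | ∃ t, p t ∧ x = Sum.inl t} = Sum.inl '' {t | p t} := by
  ext x
  simp [eq_comm]

theorem isVertexCover_iff_of_adj_iff {n : ℕ} {r : ZMod n} {H : SimpleGraph (ZMod n ⊕ Unit)}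
    (hH : ∀ x y : ZMod n ⊕ Unit, H.Adj x y ↔
      ((∃ t, (x = Sum.inl t ∧ y = Sum.inl (t + 1)) ∨ (y = Sum.inl t ∧ x = Sum.inl (t + 1))) ∨
       (x = Sum.inr () ∧ y = Sum.inl r) ∨ (y = Sum.inr () ∧ x = Sum.inl r)))
    (S : Set (ZMod n ⊕ Unit)) :
    IsVertexCover H S ↔
      (∀ t, Sum.inl t ∈ S ∨ Sum.inl (t + 1) ∈ S) ∧ (Sum.inr () ∈ S ∨ Sum.inl r ∈ S) := by
  constructor
  · intro hS
    exact ⟨fun t ↦ hS ((hH _ _).2 (Or.inl ⟨t, Or.inl ⟨rfl, rfl⟩⟩)),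
      hS ((hH _ _).2 (Or.inr (Or.inl ⟨rfl, rfl⟩)))⟩
  · rintro ⟨hcycle, hpendant⟩ x y hxy
    rcases (hH x y).1 hxy with ⟨t, ⟨rfl, rfl⟩ | ⟨rfl, rfl⟩⟩ | ⟨rfl, rfl⟩ | ⟨rfl, rfl⟩
    · exact hcycle t
    · exact (hcycle t).symm
    · exact hpendant
    · exact hpendant.symm

/-- Let `b ≥ 2` and let `H` consist of a cycle on `2b` vertices
(identified with `ZMod (2*b)`), colored alternately blue (even) and red (odd), together
with one additional vertex `z` whose unique neighbor is the red cycle vertex `r`.  Then: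
(i) the red vertices form a vertex cover of size `b`; (ii) the blue vertices together
with `z` form a vertex cover of size `b + 1`; (iii) every vertex cover has size at least
`b`, and a vertex cover of size exactly `b` equals the set of red vertices. -/
theorem stmt6 (b : ℕ) (hb : 2 ≤ b) (r : ZMod (2 * b)) (hr : Odd r.val)
    (H : SimpleGraph (ZMod (2 * b) ⊕ Unit))
    (hH : ∀ x y : ZMod (2 * b) ⊕ Unit, H.Adj x y ↔
      ((∃ t, (x = Sum.inl t ∧ y = Sum.inl (t + 1)) ∨ (y = Sum.inl t ∧ x = Sum.inl (t + 1))) ∨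
       (x = Sum.inr () ∧ y = Sum.inl r) ∨ (y = Sum.inr () ∧ x = Sum.inl r))) :
    (IsVertexCover H {x | ∃ t, Odd t.val ∧ x = Sum.inl t} ∧
      ({x | ∃ t, Odd t.val ∧ x = Sum.inl t} : Set (ZMod (2 * b) ⊕ Unit)).ncard = b) ∧
    (IsVertexCover H ({x | ∃ t, Even t.val ∧ x = Sum.inl t} ∪ {Sum.inr ()}) ∧
      ({x | ∃ t, Even t.val ∧ x = Sum.inl t} ∪ {Sum.inr ()} :
        Set (ZMod (2 * b) ⊕ Unit)).ncard = b + 1) ∧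
    (∀ S : Set (ZMod (2 * b) ⊕ Unit), IsVertexCover H S →
      b ≤ S.ncard ∧ (S.ncard = b → S = {x | ∃ t, Odd t.val ∧ x = Sum.inl t})) := by
  have : NeZero (2 * b) := ⟨by omega⟩
  have hn : 2 ∣ 2 * b := dvd_mul_right 2 b
  have hodd := ZMod.two_mul_ncard_setOf_odd_val hn
  have heven := ZMod.two_mul_ncard_setOf_even_val hn
  simp only [Set.setOf_exists_and_eq_inl, isVertexCover_iff_of_adj_iff hH]
  refine ⟨⟨⟨fun t ↦ ?_, Or.inr ⟨r, hr, rfl⟩⟩, ?_⟩, ⟨⟨fun t ↦ ?_, Or.inl (Or.inr rfl)⟩, ?_⟩,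
    fun S ⟨hcycle, hpendant⟩ ↦ ?_⟩
  · simpa [ZMod.odd_val_add_one hn] using (Nat.even_or_odd t.val).symm
  · rw [Set.ncard_image_of_injective _ Sum.inl_injective]
    omega
  · simp [ZMod.odd_val_add_one hn, ← Nat.not_odd_iff_even, em']
  · rw [Set.ncard_union_eq (by simp), Set.ncard_image_of_injective _ Sum.inl_injective,
      Set.ncard_singleton]
    omega
  have hbound := ZMod.le_two_mul_ncard_of_cover (T := Sum.inl ⁻¹' S) hcycle
  rw [← Set.ncard_preimage_inl_add_ncard_preimage_inr S]
  refine ⟨by omega, fun hcard ↦ ?_⟩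
  have hz : Sum.inr () ∉ S := by
    have : Sum.inr ⁻¹' S = ∅ := (Set.ncard_eq_zero).1 (by omega)
    exact fun h ↦ this.subset h
  have hT : ∀ t, Sum.inl t ∈ S ↔ Odd t.val :=
    ZMod.iff_of_add_one_iff_not
      (ZMod.add_one_mem_iff_of_cover (T := Sum.inl ⁻¹' S) hcycle (by omega))
      (ZMod.odd_val_add_one hn) (iff_of_true (hpendant.resolve_left hz) hr)
  ext (t | u)
  · simp [hT]
  · simpa using hz
end

section
/- Let a, b, c, d ∈ ℝ² be four points such that no three of them are collinear, none of them lies in the convex hull of the other three, and b and d lie strictly on opposite sides of the line through a and c. Then the open segments ]a, c[ and ]b, d[ intersect in exactly one point, and moreover the open segment ]a, c[ is contained in the union of the interior of the triangle with vertices a, b, d, the relative interior of the segment [b, d], and the interior of the triangle with vertices c, b, d. -/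
/-!
Since `b` and `d` lie strictly on opposite sides of the line `ac`, that line meets `]b, d[` in a
point `p`. If `p` were not in `]a, c[`, then `a` would lie on `[c, p]` or `c` on `[a, p]`, putting
a vertex in the triangle of the other three. As `b` is off the line `ac`, the lines `ac` and `bd`
share no other point. Finally `]a, c[` is `]a, p[ ∪ {p} ∪ ]p, c[`, and every point of `]a, p[`
has positive barycentric coordinates with respect to `a, b, d` (symmetrically for `]p, c[`).
-/

open AffineMap Module

section Affine

variable {k V P : Type*} [Field k] [AddCommGroup V] [Module k V] [AddTorsor V P]

theorem eq_of_mem_affineSpan_pair_of_notMem {a b c d p q : P} (hb : b ∉ line[k, a, c])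
    (hp : p ∈ line[k, a, c]) (hp' : p ∈ line[k, b, d])
    (hq : q ∈ line[k, a, c]) (hq' : q ∈ line[k, b, d]) : p = q := by
  by_contra hpq
  have hcol : Collinear k ({p, q, b} : Set P) :=
    collinear_triple_of_mem_affineSpan_pair hp' hq' (left_mem_affineSpan_pair k b d)
  exact hb <| affineSpan_pair_le_of_mem_of_mem hp hq <|
    hcol.mem_affineSpan_of_mem_of_ne (by simp) (by simp) (by simp) hpq

end Affine

section Segment

variable {𝕜 V : Type*} [Field 𝕜] [LinearOrder 𝕜] [IsStrictOrderedRing 𝕜] [AddCommGroup V]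
  [Module 𝕜 V] {a c p x : V}

theorem mem_affineSpan_pair_of_mem_openSegment (h : x ∈ openSegment 𝕜 a c) :
    x ∈ line[𝕜, a, c] :=
  (mem_segment_iff_wbtw.1 (openSegment_subset_segment 𝕜 a c h)).mem_affineSpan

theorem mem_openSegment_of_mem_affineSpan_pair {K L : Set V} (hp : p ∈ line[𝕜, a, c])
    (hK : Convex 𝕜 K) (hpK : p ∈ K) (hcK : c ∈ K) (haK : a ∉ K)
    (hL : Convex 𝕜 L) (hpL : p ∈ L) (haL : a ∈ L) (hcL : c ∉ L) :
    p ∈ openSegment 𝕜 a c := by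
  have hcol : Collinear 𝕜 ({a, p, c} : Set V) := by
    rw [Set.insert_comm]; exact collinear_insert_of_mem_affineSpan_pair hp
  rcases hcol.wbtw_or_wbtw_or_wbtw with hapc | hpca | hcap
  · refine mem_openSegment_of_ne_left_right ?_ ?_ hapc.mem_segment
    · rintro rfl; exact haK hpK
    · rintro rfl; exact hcL hpL
  · exact absurd (hL.segment_subset hpL haL hpca.mem_segment) hcL
  · exact absurd (hK.segment_subset hcK hpK hcap.mem_segment) haK

theorem mem_openSegment_or_eq_or_mem_openSegment (hp : p ∈ openSegment 𝕜 a c)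
    (hx : x ∈ openSegment 𝕜 a c) :
    x ∈ openSegment 𝕜 a p ∨ x = p ∨ x ∈ openSegment 𝕜 p c := by
  simp only [openSegment_eq_image_lineMap] at hp hx ⊢
  obtain ⟨t, ⟨ht0, ht1⟩, rfl⟩ := hp
  obtain ⟨s, ⟨hs0, hs1⟩, rfl⟩ := hx
  rcases lt_trichotomy s t with hst | rfl | hts
  · refine Or.inl ⟨s / t, ⟨by positivity, (div_lt_one ht0).2 hst⟩, ?_⟩
    rw [lineMap_lineMap_right, div_mul_cancel₀ s ht0.ne']
  · exact Or.inr (Or.inl rfl)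
  · have h1t : 0 < 1 - t := sub_pos.2 ht1
    refine Or.inr (Or.inr ⟨(s - t) / (1 - t), ⟨div_pos (by linarith) h1t,
      (div_lt_one h1t).2 (by linarith)⟩, ?_⟩)
    rw [lineMap_lineMap_left]
    congr 1
    field_simp
    ring

end Segment

theorem mem_interior_convexHull_triple_of_mem_openSegment {E : Type*} [NormedAddCommGroup E]
    [NormedSpace ℝ E] (hE : finrank ℝ E = 2) {a b d p x : E}
    (habd : ¬Collinear ℝ ({a, b, d} : Set E)) (hp : p ∈ openSegment ℝ b d)
    (hx : x ∈ openSegment ℝ a p) : x ∈ interior (convexHull ℝ {a, b, d}) := by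
  have : FiniteDimensional ℝ E := Module.finite_of_finrank_pos (by omega)
  have hind := affineIndependent_iff_not_collinear_set.2 habd
  let B : AffineBasis (Fin 3) ℝ E :=
    ⟨![a, b, d], hind, by rw [hind.affineSpan_eq_top_iff_card_eq_finrank_add_one]; simp [hE]⟩
  have hrange : Set.range B = {a, b, d} := by
    change Set.range ![a, b, d] = _
    rw [Matrix.range_cons, Matrix.range_cons_cons_empty, Set.singleton_union]
  rw [openSegment_eq_image_lineMap] at hp hx
  obtain ⟨t, ⟨ht0, ht1⟩, rfl⟩ := hp
  obtain ⟨s, ⟨hs0, hs1⟩, rfl⟩ := hx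
  rw [← hrange, B.interior_convexHull]
  intro i
  change 0 < B.coord i (lineMap (B 0) (lineMap (B 1) (B 2) t) s)
  rw [apply_lineMap, apply_lineMap, B.coord_apply, B.coord_apply, B.coord_apply]
  fin_cases i <;> simp [lineMap_apply_module] <;> nlinarith

theorem stmt7_general (a b c d : EuclideanSpace ℝ (Fin 2))
    (h2 : ¬Collinear ℝ ({a, b, d} : Set (EuclideanSpace ℝ (Fin 2))))
    (h4 : ¬Collinear ℝ ({b, c, d} : Set (EuclideanSpace ℝ (Fin 2))))
    (ha : a ∉ convexHull ℝ ({b, c, d} : Set (EuclideanSpace ℝ (Fin 2))))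
    (hc : c ∉ convexHull ℝ ({a, b, d} : Set (EuclideanSpace ℝ (Fin 2))))
    (hside : (affineSpan ℝ ({a, c} : Set (EuclideanSpace ℝ (Fin 2)))).SOppSide b d) :
    (∃! p, p ∈ openSegment ℝ a c ∩ openSegment ℝ b d) ∧
    openSegment ℝ a c ⊆
      interior (convexHull ℝ ({a, b, d} : Set (EuclideanSpace ℝ (Fin 2)))) ∪
        openSegment ℝ b d ∪
        interior (convexHull ℝ ({c, b, d} : Set (EuclideanSpace ℝ (Fin 2)))) := by
  obtain ⟨p, hp_ac, hbpd⟩ := hside.exists_sbtw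
  have hp_bd : p ∈ openSegment ℝ b d :=
    mem_openSegment_of_ne_left_right hbpd.left_ne hbpd.right_ne hbpd.wbtw.mem_segment
  have hp_hull {s : Set (EuclideanSpace ℝ (Fin 2))} (hb : b ∈ s) (hd : d ∈ s) :
      p ∈ convexHull ℝ s :=
    segment_subset_convexHull hb hd (openSegment_subset_segment ℝ b d hp_bd)
  have hp_ac' : p ∈ openSegment ℝ a c :=
    mem_openSegment_of_mem_affineSpan_pair hp_ac
      (convex_convexHull ℝ _) (hp_hull (by simp) (by simp)) (subset_convexHull ℝ _ (by simp)) ha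
      (convex_convexHull ℝ _) (hp_hull (by simp) (by simp)) (subset_convexHull ℝ _ (by simp)) hc
  refine ⟨⟨p, ⟨hp_ac', hp_bd⟩, fun q ⟨hq_ac, hq_bd⟩ => ?_⟩, fun x hx => ?_⟩
  · exact eq_of_mem_affineSpan_pair_of_notMem hside.left_notMem
      (mem_affineSpan_pair_of_mem_openSegment hq_ac) (mem_affineSpan_pair_of_mem_openSegment hq_bd)
      hp_ac hbpd.wbtw.mem_affineSpan
  have hE : finrank ℝ (EuclideanSpace ℝ (Fin 2)) = 2 := finrank_euclideanSpace_fin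
  rcases mem_openSegment_or_eq_or_mem_openSegment hp_ac' hx with hxap | rfl | hxpc
  · exact Or.inl (Or.inl (mem_interior_convexHull_triple_of_mem_openSegment hE h2 hp_bd hxap))
  · exact Or.inl (Or.inr hp_bd)
  · rw [Set.insert_comm] at h4
    rw [openSegment_symm] at hxpc
    exact Or.inr (mem_interior_convexHull_triple_of_mem_openSegment hE h4 hp_bd hxpc)

/-- Let `a, b, c, d ∈ ℝ²` be four points, no three collinear, none in
the convex hull of the other three, with `b` and `d` strictly on opposite sides of the
line through `a` and `c`.  Then the open segments `]a, c[` and `]b, d[` meet in exactly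
one point, and `]a, c[` is contained in the union of the interior of triangle `abd`, the
relative interior (= open segment) of `[b, d]`, and the interior of triangle `cbd`. -/
theorem stmt7 (a b c d : EuclideanSpace ℝ (Fin 2))
    (h1 : ¬Collinear ℝ ({a, b, c} : Set (EuclideanSpace ℝ (Fin 2))))
    (h2 : ¬Collinear ℝ ({a, b, d} : Set (EuclideanSpace ℝ (Fin 2))))
    (h3 : ¬Collinear ℝ ({a, c, d} : Set (EuclideanSpace ℝ (Fin 2))))
    (h4 : ¬Collinear ℝ ({b, c, d} : Set (EuclideanSpace ℝ (Fin 2))))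
    (ha : a ∉ convexHull ℝ ({b, c, d} : Set (EuclideanSpace ℝ (Fin 2))))
    (hb : b ∉ convexHull ℝ ({a, c, d} : Set (EuclideanSpace ℝ (Fin 2))))
    (hc : c ∉ convexHull ℝ ({a, b, d} : Set (EuclideanSpace ℝ (Fin 2))))
    (hd : d ∉ convexHull ℝ ({a, b, c} : Set (EuclideanSpace ℝ (Fin 2))))
    (hside : (affineSpan ℝ ({a, c} : Set (EuclideanSpace ℝ (Fin 2)))).SOppSide b d) :
    (∃! p, p ∈ openSegment ℝ a c ∩ openSegment ℝ b d) ∧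
    openSegment ℝ a c ⊆
      interior (convexHull ℝ ({a, b, d} : Set (EuclideanSpace ℝ (Fin 2)))) ∪
        openSegment ℝ b d ∪
        interior (convexHull ℝ ({c, b, d} : Set (EuclideanSpace ℝ (Fin 2)))) :=
  stmt7_general a b c d h2 h4 ha hc hside
end
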